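/- Fix an integer t ≥ 1 and s ∈ {0, L} with s − s0 + t even, and set r = (s − s0 + t)/2. The number of paths w : {0,…,t−1} → {−1,+1} whose positions X_k = s0 + w(0) + ⋯ + w(k−1) satisfy 0 < X_k < L for all 0 ≤ k < t and X_t = s (i.e., paths first absorbed at time exactly t at state s) equals Σ_{k∈ℤ} [C(t−1, r′+kL) − C(t−1, r′+s0+kL)], where r′ = r if s = 0 and r′ = r−1 if s = L. -/

import Mathlib

/-- Binomial coefficient `C(n,k)` with integer lower index `k`, equal to `0`
unless `0 ≤ k ≤ n`. -/
def Cb (n : ℕ) (k : ℤ) : ℤ := if 0 ≤ k ∧ k ≤ (n : ℤ) then (n.choose k.toNat : ℤ) else 0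

/-- The position after `k` steps of a ±1 path `w` of length `t` started at `s0`. -/
def pathPos (s0 : ℤ) {t : ℕ} (w : Fin t → ℤ) (k : ℕ) : ℤ :=
  s0 + ∑ i ∈ Finset.range k, if h : i < t then w ⟨i, h⟩ else 0

lemma Cb_out (n : ℕ) (k : ℤ) (h : k < 0 ∨ (n:ℤ) < k) : Cb n k = 0 := by
  simp only [Cb, ite_eq_right_iff]; intro h'; omega

lemma Cb_pascal (n : ℕ) (k : ℤ) : Cb (n+1) k = Cb n k + Cb n (k-1) := by
  unfold Cb
  split_ifs with h1 h2 h3 h2 h3 <;> push_cast <;> try omega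
  · -- 0 ≤ k ≤ n+1, 0 ≤ k ≤ n, 0 ≤ k-1 ≤ n : so 1 ≤ k ≤ n
    have hk : k.toNat = (k-1).toNat + 1 := by omega
    rw [hk, Nat.choose_succ_succ]
    push_cast; ring
  · -- h1, h2, ¬h3 : k = 0
    have hk : k.toNat = 0 := by omega
    simp [hk]
  · -- h1, ¬h2, h3 : k = n+1
    have hk : k.toNat = n+1 := by omega
    have hk1 : (k-1).toNat = n := by omega
    simp [hk, hk1]

lemma Cb_symm (n : ℕ) (k : ℤ) : Cb n k = Cb n ((n:ℤ) - k) := by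
  unfold Cb
  split_ifs with h1 h2 h2 <;> try omega
  · have : (↑n - k).toNat = n - k.toNat := by omega
    rw [this, Nat.choose_symm (by omega : k.toNat ≤ n)]

/-- Number of ±1 sequences of length `n` with sum `d` (as a formula). -/
def Wd (n : ℕ) (d : ℤ) : ℤ := if 2 ∣ ((n:ℤ) + d) then Cb n (((n:ℤ)+d)/2) else 0

lemma Wd_eq_Cb (n : ℕ) (d m : ℤ) (h : (n:ℤ) + d = 2*m) : Wd n d = Cb n m := by
  rw [Wd, if_pos ⟨m, h⟩, h, Int.mul_ediv_cancel_left _ (by norm_num)]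

lemma Wd_symm (n : ℕ) (d : ℤ) : Wd n d = Wd n (-d) := by
  by_cases h : 2 ∣ ((n:ℤ) + d)
  · obtain ⟨m, hm⟩ := h
    rw [Wd_eq_Cb n d m hm, Wd_eq_Cb n (-d) ((n:ℤ)-m) (by omega), Cb_symm]
  · rw [Wd, if_neg h, Wd, if_neg (by omega)]

lemma Wd_pascal (n : ℕ) (d : ℤ) : Wd (n+1) d = Wd n (d-1) + Wd n (d+1) := by
  by_cases h : 2 ∣ ((n:ℤ) + 1 + d)
  · obtain ⟨m, hm⟩ := h
    rw [Wd_eq_Cb (n+1) d m (by push_cast; omega), Wd_eq_Cb n (d-1) (m-1) (by omega),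
      Wd_eq_Cb n (d+1) m (by omega), Cb_pascal]
    ring
  · rw [Wd, if_neg (by push_cast at h ⊢; omega), Wd, if_neg (by omega), Wd, if_neg (by omega)]
    ring

lemma Wd_out (n : ℕ) (d : ℤ) (h : (n:ℤ) < d ∨ d < -(n:ℤ)) : Wd n d = 0 := by
  by_cases hd : 2 ∣ ((n:ℤ) + d)
  · obtain ⟨m, hm⟩ := hd
    rw [Wd_eq_Cb n d m hm, Cb_out]
    omega
  · rw [Wd, if_neg hd]

lemma Wd_zero (d : ℤ) : Wd 0 d = if d = 0 then 1 else 0 := by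
  split_ifs with h
  · rw [h, Wd_eq_Cb 0 0 0 (by omega)]
    simp [Cb]
  · rcases lt_or_gt_of_ne h with h' | h'
    · exact Wd_out 0 d (by omega)
    · exact Wd_out 0 d (by omega)

lemma pathPos_zero (a : ℤ) {t : ℕ} (w : Fin t → ℤ) : pathPos a w 0 = a := by
  simp [pathPos]

lemma pathPos_succ (a : ℤ) {t : ℕ} (w : Fin t → ℤ) (k : ℕ) :
    pathPos a w (k+1) = pathPos a w k + if h : k < t then w ⟨k, h⟩ else 0 := by
  rw [pathPos, pathPos, Finset.sum_range_succ, add_assoc]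

lemma pathPos_init (a : ℤ) {n : ℕ} (w : Fin (n+1) → ℤ) (k : ℕ) (hk : k ≤ n) :
    pathPos a (Fin.init w) k = pathPos a w k := by
  rw [pathPos, pathPos]
  congr 1
  refine Finset.sum_congr rfl fun i hi => ?_
  rw [Finset.mem_range] at hi
  have h1 : i < n := by omega
  rw [dif_pos h1, dif_pos (by omega : i < n + 1)]
  show w (Fin.castSucc ⟨i, h1⟩) = _
  congr 1

def S (L : ℕ) (a : ℤ) (n : ℕ) (b : ℤ) : Set (Fin n → ℤ) :=
  {w | (∀ i, w i = 1 ∨ w i = -1) ∧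
    (∀ k < n, 0 < pathPos a w k ∧ pathPos a w k < (L:ℤ)) ∧ pathPos a w n = b}

lemma S_finite (L : ℕ) (a : ℤ) (n : ℕ) (b : ℤ) : (S L a n b).Finite := by
  apply Set.Finite.subset (Set.Finite.pi (fun _ : Fin n =>
    ((Set.finite_singleton (-1:ℤ)).insert 1)))
  intro w hw
  rw [Set.mem_pi]
  intro i _
  rcases hw.1 i with h | h <;> simp [h]

lemma snoc_mem (L : ℕ) (a : ℤ) (n : ℕ) (c ε : ℤ) (hε : ε = 1 ∨ ε = -1)
    (hc : 0 < c ∧ c < (L:ℤ)) (w' : Fin n → ℤ) (hw' : w' ∈ S L a n c) :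
    Fin.snoc w' ε ∈ S L a (n+1) (c + ε) := by
  obtain ⟨h1, h2, h3⟩ := hw'
  have hinit : ∀ k ≤ n, pathPos a (Fin.snoc w' ε) k = pathPos a w' k := by
    intro k hk
    rw [← pathPos_init a (Fin.snoc w' ε) k hk, Fin.init_snoc]
  refine ⟨?_, ?_, ?_⟩
  · intro i
    refine Fin.lastCases ?_ ?_ i
    · rw [Fin.snoc_last]; exact hε
    · intro j; rw [Fin.snoc_castSucc]; exact h1 j
  · intro k hk
    rcases Nat.lt_or_ge k n with h | h
    · rw [hinit k (by omega)]; exact h2 k h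
    · have hkn : k = n := by omega
      rw [hkn, hinit n le_rfl, h3]; exact hc
  · rw [pathPos_succ, dif_pos (n.lt_succ_self), hinit n le_rfl, h3]
    have he : (⟨n, n.lt_succ_self⟩ : Fin (n+1)) = Fin.last n := rfl
    rw [he, Fin.snoc_last]

lemma S_succ_eq (L : ℕ) (a : ℤ) (n : ℕ) (b : ℤ) :
    S L a (n+1) b =
      (if 0 < b-1 ∧ b-1 < (L:ℤ) then (fun w => Fin.snoc w (1:ℤ)) '' S L a n (b-1) else ∅) ∪
      (if 0 < b+1 ∧ b+1 < (L:ℤ) then (fun w => Fin.snoc w (-1:ℤ)) '' S L a n (b+1) else ∅) := by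
  ext w
  constructor
  · rintro ⟨h1, h2, h3⟩
    have hlast := h1 (Fin.last n)
    have hinit : ∀ k ≤ n, pathPos a (Fin.init w) k = pathPos a w k :=
      fun k hk => pathPos_init a w k hk
    have hpp : pathPos a w (n+1) = pathPos a w n + w (Fin.last n) := by
      rw [pathPos_succ, dif_pos (n.lt_succ_self)]
      rfl
    have hintn := h2 n (n.lt_succ_self)
    have hmem : Fin.init w ∈ S L a n (pathPos a w n) := by
      refine ⟨fun i => h1 _, fun k hk => ?_, hinit n le_rfl⟩
      rw [hinit k (by omega)]
      exact h2 k (by omega)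
    have hsnoc : Fin.snoc (Fin.init w) (w (Fin.last n)) = w := Fin.snoc_init_self w
    rcases hlast with hl | hl
    · left
      have hb : pathPos a w n = b - 1 := by omega
      rw [if_pos (hb ▸ hintn)]
      exact ⟨Fin.init w, hb ▸ hmem, by rw [← hl]; exact hsnoc⟩
    · right
      have hb : pathPos a w n = b + 1 := by omega
      rw [if_pos (hb ▸ hintn)]
      exact ⟨Fin.init w, hb ▸ hmem, by rw [← hl]; exact hsnoc⟩
  · intro hw
    rcases hw with hw | hw
    · split_ifs at hw with hc
      · obtain ⟨w', hw', rfl⟩ := hw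
        have := snoc_mem L a n (b-1) 1 (Or.inl rfl) hc w' hw'
        simpa using this
      · exact absurd hw (Set.notMem_empty _)
    · split_ifs at hw with hc
      · obtain ⟨w', hw', rfl⟩ := hw
        have := snoc_mem L a n (b+1) (-1) (Or.inr rfl) hc w' hw'
        simpa using this
      · exact absurd hw (Set.notMem_empty _)

lemma snoc_inj (n : ℕ) (x : ℤ) : Function.Injective (fun w : Fin n → ℤ => (Fin.snoc w x : Fin (n+1) → ℤ)) := by
  intro u v h
  have := congrArg Fin.init h
  simpa [Fin.init_snoc] using this

def M (L : ℕ) (a : ℤ) : ℕ → ℤ → ℕ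
  | 0, b => if b = a then 1 else 0
  | n+1, b => (if 0 < b-1 ∧ b-1 < (L:ℤ) then M L a n (b-1) else 0) +
      (if 0 < b+1 ∧ b+1 < (L:ℤ) then M L a n (b+1) else 0)

lemma ncard_S (L : ℕ) (a : ℤ) : ∀ (n : ℕ) (b : ℤ), (S L a n b).ncard = M L a n b := by
  intro n
  induction n with
  | zero =>
    intro b
    have hS : S L a 0 b = if b = a then Set.univ else ∅ := by
      ext w
      have h0 : pathPos a w 0 = a := pathPos_zero a w
      constructor
      · rintro ⟨-, -, h3⟩
        rw [if_pos (by omega)]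
        trivial
      · intro hw
        split_ifs at hw with hb
        · exact ⟨fun i => i.elim0, fun k hk => absurd hk (Nat.not_lt_zero k), by omega⟩
        · exact absurd hw (Set.notMem_empty _)
    rw [hS, M]
    split_ifs
    · rw [Set.ncard_univ, Nat.card_unique]
    · exact Set.ncard_empty _
  | succ n ih =>
    intro b
    rw [S_succ_eq, M]
    have hdisj : Disjoint
        (if 0 < b-1 ∧ b-1 < (L:ℤ) then (fun w : Fin n → ℤ => (Fin.snoc w (1:ℤ) : Fin (n+1) → ℤ)) '' S L a n (b-1) else ∅)
        (if 0 < b+1 ∧ b+1 < (L:ℤ) then (fun w : Fin n → ℤ => (Fin.snoc w (-1:ℤ) : Fin (n+1) → ℤ)) '' S L a n (b+1) else ∅) := by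
      split_ifs <;> try simp
      rw [Set.disjoint_left]
      rintro w ⟨u, -, rfl⟩ ⟨v, -, hv⟩
      have := congrArg (fun f => f (Fin.last n)) hv
      simp only [Fin.snoc_last] at this
      norm_num at this
    have hf1 : (if 0 < b-1 ∧ b-1 < (L:ℤ) then (fun w : Fin n → ℤ => (Fin.snoc w (1:ℤ) : Fin (n+1) → ℤ)) '' S L a n (b-1)
        else ∅).Finite := by
      split_ifs
      · exact (S_finite L a n (b-1)).image _
      · exact Set.finite_empty
    have hf2 : (if 0 < b+1 ∧ b+1 < (L:ℤ) then (fun w : Fin n → ℤ => (Fin.snoc w (-1:ℤ) : Fin (n+1) → ℤ)) '' S L a n (b+1)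
        else ∅).Finite := by
      split_ifs
      · exact (S_finite L a n (b+1)).image _
      · exact Set.finite_empty
    rw [Set.ncard_union_eq hdisj hf1 hf2]
    congr 1
    · split_ifs
      · rw [Set.ncard_image_of_injective _ (snoc_inj n 1), ih]
      · exact Set.ncard_empty _
    · split_ifs
      · rw [Set.ncard_image_of_injective _ (snoc_inj n (-1)), ih]
      · exact Set.ncard_empty _

noncomputable def Fs (L : ℕ) (a : ℤ) (n : ℕ) (b : ℤ) : ℤ :=
  ∑ k ∈ Finset.Icc (-(n:ℤ)-1) ((n:ℤ)+1), (Wd n (b - a + 2*k*L) - Wd n (b + a + 2*k*L))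

section Fslemmas
variable {L : ℕ} {a : ℤ} (hL : 2 ≤ L) (ha : 0 < a) (haL : a < (L:ℤ))

include hL ha haL in
lemma vanish1 (n : ℕ) (b k : ℤ) (hb : 0 ≤ b) (hbL : b ≤ (L:ℤ))
    (hk : (n:ℤ)+2 ≤ k ∨ k ≤ -(n:ℤ)-2) : Wd n (b - a + 2*k*L) = 0 := by
  apply Wd_out
  rcases hk with hk | hk
  · left; nlinarith [hk, hL, hb, haL]
  · right; nlinarith [hk, hL, hbL, ha]

include hL ha haL in
lemma vanish2 (n : ℕ) (b k : ℤ) (hb : 0 ≤ b) (hbL : b ≤ (L:ℤ))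
    (hk : (n:ℤ)+2 ≤ k ∨ k ≤ -(n:ℤ)-2) : Wd n (b + a + 2*k*L) = 0 := by
  apply Wd_out
  rcases hk with hk | hk
  · left; nlinarith
  · right; nlinarith

include hL ha haL in
lemma Fs_ext (n : ℕ) (b : ℤ) (hb : 0 ≤ b) (hbL : b ≤ (L:ℤ)) (m : ℤ) (hm : (n:ℤ)+1 ≤ m) :
    ∑ k ∈ Finset.Icc (-m) m, (Wd n (b - a + 2*k*L) - Wd n (b + a + 2*k*L)) = Fs L a n b := by
  rw [Fs]
  symm
  apply Finset.sum_subset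
  · intro x hx
    rw [Finset.mem_Icc] at hx ⊢
    omega
  · intro k hk hk'
    rw [Finset.mem_Icc] at hk hk'
    have hkk : (n:ℤ)+2 ≤ k ∨ k ≤ -(n:ℤ)-2 := by omega
    rw [vanish1 hL ha haL n b k hb hbL hkk, vanish2 hL ha haL n b k hb hbL hkk, sub_zero]

omit hL ha haL in
lemma Fs_zero_b (n : ℕ) : Fs L a n 0 = 0 := by
  rw [Fs, Finset.sum_sub_distrib]
  have h1 : ∑ k ∈ Finset.Icc (-(n:ℤ)-1) ((n:ℤ)+1), Wd n (0 - a + 2*k*L)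
      = ∑ k ∈ Finset.Icc (-(n:ℤ)-1) ((n:ℤ)+1), Wd n (0 + a + 2*k*L) := by
    apply Finset.sum_nbij' (i := fun k => -k) (j := fun k => -k)
    · intro x hx; rw [Finset.mem_Icc] at hx ⊢; omega
    · intro x hx; rw [Finset.mem_Icc] at hx ⊢; omega
    · intro x _; ring
    · intro x _; ring
    · intro x _
      rw [Wd_symm]
      congr 1
      ring
  rw [h1, sub_self]

include hL ha haL in
lemma Fs_L_b (n : ℕ) : Fs L a n (L:ℤ) = 0 := by
  rw [Fs, Finset.sum_sub_distrib]
  set g : ℤ → ℤ := fun k => Wd n ((L:ℤ) + a + 2*k*L) with hg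
  have h1 : ∑ k ∈ Finset.Icc (-(n:ℤ)-1) ((n:ℤ)+1), Wd n ((L:ℤ) - a + 2*k*L)
      = ∑ k ∈ Finset.Icc (-(n:ℤ)-2) ((n:ℤ)), g k := by
    apply Finset.sum_nbij' (i := fun k => -k-1) (j := fun k => -k-1)
    · intro x hx; rw [Finset.mem_Icc] at hx ⊢; omega
    · intro x hx; rw [Finset.mem_Icc] at hx ⊢; omega
    · intro x _; ring
    · intro x _; ring
    · intro x _
      rw [Wd_symm, hg]
      congr 1
      push_cast
      ring
  have h2 : ∑ k ∈ Finset.Icc (-(n:ℤ)-2) ((n:ℤ)), g k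
      = ∑ k ∈ Finset.Icc (-(n:ℤ)-2) ((n:ℤ)+1), g k := by
    apply Finset.sum_subset
    · intro x hx; rw [Finset.mem_Icc] at hx ⊢; omega
    · intro k hk hk'
      rw [Finset.mem_Icc] at hk hk'
      have hkval : k = (n:ℤ)+1 := by omega
      rw [hg]
      apply Wd_out
      left
      rw [hkval]
      nlinarith
  have h3 : ∑ k ∈ Finset.Icc (-(n:ℤ)-1) ((n:ℤ)+1), g k
      = ∑ k ∈ Finset.Icc (-(n:ℤ)-2) ((n:ℤ)+1), g k := by
    apply Finset.sum_subset
    · intro x hx; rw [Finset.mem_Icc] at hx ⊢; omega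
    · intro k hk hk'
      rw [Finset.mem_Icc] at hk hk'
      have hkval : k = -(n:ℤ)-2 := by omega
      rw [hg]
      apply Wd_out
      right
      rw [hkval]
      nlinarith
  rw [h1, h2, ← h3, sub_self]

include hL ha haL in
lemma Fs_base (b : ℤ) (hb : 0 < b) (hbL : b < (L:ℤ)) :
    Fs L a 0 b = if b = a then 1 else 0 := by
  rw [Fs]
  simp only [Nat.cast_zero]
  have hIcc : Finset.Icc (-(0:ℤ)-1) ((0:ℤ)+1) = {-1, 0, 1} := by decide
  rw [hIcc]
  rw [show ({-1, 0, 1} : Finset ℤ) = insert (-1) (insert 0 {1}) from rfl]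
  rw [Finset.sum_insert (by decide), Finset.sum_insert (by decide), Finset.sum_singleton]
  simp only [Wd_zero]
  split_ifs <;> omega

include hL ha haL in
lemma M_eq_Fs : ∀ (n : ℕ) (b : ℤ), 0 < b → b < (L:ℤ) → (M L a n b : ℤ) = Fs L a n b := by
  intro n
  induction n with
  | zero =>
    intro b hb hbL
    rw [Fs_base hL ha haL b hb hbL, M]
    split_ifs <;> simp
  | succ n ih =>
    intro b hb hbL
    have key : ∀ c : ℤ, 0 ≤ c → c ≤ (L:ℤ) →
        ((if 0 < c ∧ c < (L:ℤ) then M L a n c else 0 : ℕ) : ℤ) = Fs L a n c := by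
      intro c hc hcL
      split_ifs with h
      · exact ih c h.1 h.2
      · rcases (by omega : c = 0 ∨ c = (L:ℤ)) with rfl | rfl
        · rw [Fs_zero_b]; rfl
        · rw [Fs_L_b hL ha haL]; rfl
    have hpas : Fs L a (n+1) b = Fs L a n (b-1) + Fs L a n (b+1) := by
      rw [← Fs_ext hL ha haL n (b-1) (by omega) (by omega) ((n:ℤ)+2) (by omega),
        ← Fs_ext hL ha haL n (b+1) (by omega) (by omega) ((n:ℤ)+2) (by omega),
        Fs, ← Finset.sum_add_distrib]
      push_cast
      have hrange : Finset.Icc (-((n:ℤ)+1)-1) ((n:ℤ)+1+1) = Finset.Icc (-((n:ℤ)+2)) ((n:ℤ)+2) := by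
        congr 1 <;> ring
      rw [hrange]
      apply Finset.sum_congr rfl
      intro k _
      rw [Wd_pascal, Wd_pascal]
      have e1 : b - a + 2*k*(L:ℤ) - 1 = b - 1 - a + 2*k*L := by ring
      have e2 : b - a + 2*k*(L:ℤ) + 1 = b + 1 - a + 2*k*L := by ring
      have e3 : b + a + 2*k*(L:ℤ) - 1 = b - 1 + a + 2*k*L := by ring
      have e4 : b + a + 2*k*(L:ℤ) + 1 = b + 1 + a + 2*k*L := by ring
      rw [e1, e2, e3, e4]
      ring
    rw [M, hpas]
    push_cast
    rw [← key (b-1) (by omega) (by omega), ← key (b+1) (by omega) (by omega)]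
    push_cast
    split_ifs <;> push_cast <;> ring

end Fslemmas


/-- The number of ±1 paths of length `t` started at `s0` that stay in the
open interval `(0,L)` at all times `k < t` and end at the barrier `s ∈ {0,L}` at time `t`
equals the method-of-images expression with `t-1` and `r'`. -/
theorem stmt_2 (L : ℕ) (hL : 2 ≤ L) (s0 : ℤ) (hs0 : 0 < s0) (hs0L : s0 < (L : ℤ))
    (t : ℕ) (ht : 1 ≤ t) (s : ℤ) (hs : s = 0 ∨ s = (L : ℤ))
    (hpar : (2 : ℤ) ∣ (s - s0 + t))
    (r : ℤ) (hr : r = (s - s0 + t) / 2)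
    (r' : ℤ) (hr' : r' = if s = 0 then r else r - 1) :
    (Set.ncard {w : Fin t → ℤ | (∀ i, w i = 1 ∨ w i = -1) ∧
        (∀ k < t, 0 < pathPos s0 w k ∧ pathPos s0 w k < (L : ℤ)) ∧
        pathPos s0 w t = s} : ℤ)
      = ∑' k : ℤ, (Cb (t - 1) (r' + k * L) - Cb (t - 1) (r' + s0 + k * L)) := by
  obtain ⟨m, rfl⟩ : ∃ m, t = m + 1 := ⟨t - 1, by omega⟩
  obtain ⟨c, hc⟩ := hpar
  show ((S L s0 (m+1) s).ncard : ℤ) = _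
  rw [ncard_S]
  simp only [Nat.add_sub_cancel]
  have hL' : (2:ℤ) ≤ (L:ℤ) := by exact_mod_cast hL
  rcases hs with rfl | rfl
  · -- s = 0
    have hr'0 : r' = r := by rw [hr', if_pos rfl]
    have h2r : 2 * r' = (m:ℤ) + 1 - s0 := by
      push_cast at hc
      omega
    have he1 : ∀ k : ℤ, (m:ℤ) + (1 - s0 + 2*k*L) = 2*(r' + k*L) := by
      intro k; linarith [h2r]
    have he2 : ∀ k : ℤ, (m:ℤ) + (1 + s0 + 2*k*L) = 2*(r' + s0 + k*L) := by
      intro k; linarith [h2r]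
    have hout : ∀ k : ℤ, k ∉ Finset.Icc (-(m:ℤ)-1) ((m:ℤ)+1) →
        Cb m (r' + k * L) - Cb m (r' + s0 + k * L) = 0 := by
      intro k hk
      rw [Finset.mem_Icc] at hk
      have hkk : (m:ℤ)+2 ≤ k ∨ k ≤ -(m:ℤ)-2 := by omega
      rw [← Wd_eq_Cb m (1 - s0 + 2*k*L) _ (he1 k), ← Wd_eq_Cb m (1 + s0 + 2*k*L) _ (he2 k),
        vanish1 hL hs0 hs0L m 1 k (by omega) (by omega) hkk,
        vanish2 hL hs0 hs0L m 1 k (by omega) (by omega) hkk, sub_zero]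
    rw [tsum_eq_sum hout, M, if_neg (by omega), if_pos ⟨by omega, by omega⟩]
    rw [zero_add, show (0:ℤ)+1 = 1 by norm_num]
    rw [M_eq_Fs hL hs0 hs0L m 1 (by omega) (by omega), Fs]
    apply Finset.sum_congr rfl
    intro k _
    rw [Wd_eq_Cb m (1 - s0 + 2*k*L) _ (he1 k), Wd_eq_Cb m (1 + s0 + 2*k*L) _ (he2 k)]
  · -- s = L
    have hr'L : r' = r - 1 := by rw [hr', if_neg (by omega)]
    have h2r : 2 * r' = (m:ℤ) + (L:ℤ) - 1 - s0 := by
      push_cast at hc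
      omega
    have he1 : ∀ k : ℤ, (m:ℤ) + ((L:ℤ) - 1 - s0 + 2*k*L) = 2*(r' + k*L) := by
      intro k; linarith [h2r]
    have he2 : ∀ k : ℤ, (m:ℤ) + ((L:ℤ) - 1 + s0 + 2*k*L) = 2*(r' + s0 + k*L) := by
      intro k; linarith [h2r]
    have hout : ∀ k : ℤ, k ∉ Finset.Icc (-(m:ℤ)-1) ((m:ℤ)+1) →
        Cb m (r' + k * L) - Cb m (r' + s0 + k * L) = 0 := by
      intro k hk
      rw [Finset.mem_Icc] at hk
      have hkk : (m:ℤ)+2 ≤ k ∨ k ≤ -(m:ℤ)-2 := by omega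
      rw [← Wd_eq_Cb m ((L:ℤ) - 1 - s0 + 2*k*L) _ (he1 k),
        ← Wd_eq_Cb m ((L:ℤ) - 1 + s0 + 2*k*L) _ (he2 k),
        vanish1 hL hs0 hs0L m ((L:ℤ)-1) k (by omega) (by omega) hkk,
        vanish2 hL hs0 hs0L m ((L:ℤ)-1) k (by omega) (by omega) hkk, sub_zero]
    rw [tsum_eq_sum hout, M, if_pos ⟨by omega, by omega⟩, if_neg (by omega), add_zero]
    rw [M_eq_Fs hL hs0 hs0L m ((L:ℤ)-1) (by omega) (by omega), Fs]
    apply Finset.sum_congr rfl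
    intro k _
    rw [Wd_eq_Cb m ((L:ℤ) - 1 - s0 + 2*k*L) _ (he1 k),
      Wd_eq_Cb m ((L:ℤ) - 1 + s0 + 2*k*L) _ (he2 k)]
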